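/- arXiv:2408.12465 — 3 statements merged into one kernel-verified Lean document; each statement's English description precedes it below -/
import Mathlib

section
/- Let n be a natural number, A an n×n real matrix, and r a vector in ℝⁿ. Then, as h → 0, the difference (exp(hA) · ∫₀ʰ exp(−sA) ds)·r − h · exp((h/2)A)·r is O(h³); i.e., replacing the exact inhomogeneous term of the variation-of-constants formula by h·exp(A h/2)·r introduces an error of third order in the time step h. -/
open Matrix Filter Asymptotics

section Helper

/-- If `f 0 = 0` and the derivative of `f` is `O(h^k)` at `0`, then `f = O(h^(k+1))`. -/
lemma isBigO_pow_succ_of_deriv {E : Type*} [NormedAddCommGroup E] [NormedSpace ℝ E]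
    {f g : ℝ → E} {k : ℕ} (hf : ∀ x : ℝ, HasDerivAt f (g x) x) (h0 : f 0 = 0)
    (hg : g =O[nhds (0:ℝ)] fun h : ℝ => h ^ k) :
    f =O[nhds (0:ℝ)] fun h : ℝ => h ^ (k + 1) := by
  rcases hg.exists_nonneg with ⟨C, hC0, hC⟩
  rw [IsBigOWith, Metric.eventually_nhds_iff] at hC
  obtain ⟨δ, hδ, hball⟩ := hC
  rw [isBigO_iff]
  refine ⟨C, Metric.eventually_nhds_iff.2 ⟨δ, hδ, fun {h} hh => ?_⟩⟩
  have hh' : |h| < δ := by simpa [Real.dist_eq] using hh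
  have key : ‖f h - f 0‖ ≤ C * |h| ^ k * ‖h - 0‖ := by
    refine Convex.norm_image_sub_le_of_norm_hasDerivWithin_le
      (f' := g) (s := Set.uIcc 0 h) (fun x hx => (hf x).hasDerivWithinAt)
      (fun x hx => ?_) (convex_uIcc 0 h) (Set.left_mem_uIcc) (Set.right_mem_uIcc)
    have hxh : |x| ≤ |h| := by
      rcases Set.mem_uIcc.1 hx with h1 | h1
      · rw [abs_of_nonneg h1.1, abs_of_nonneg (h1.1.trans h1.2)]; exact h1.2
      · rw [abs_of_nonpos h1.2, abs_of_nonpos (h1.1.trans h1.2)]; exact neg_le_neg h1.1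
    have hxδ : dist x 0 < δ := by
      rw [Real.dist_eq, sub_zero]; exact lt_of_le_of_lt hxh hh'
    calc ‖g x‖ ≤ C * ‖x ^ k‖ := hball hxδ
      _ = C * |x| ^ k := by rw [norm_pow, Real.norm_eq_abs]
      _ ≤ C * |h| ^ k := by
          exact mul_le_mul_of_nonneg_left (pow_le_pow_left₀ (abs_nonneg x) hxh k) hC0
  rw [h0, sub_zero, sub_zero] at key
  calc ‖f h‖ ≤ C * |h| ^ k * ‖h‖ := key
    _ = C * ‖h ^ (k + 1)‖ := by
        rw [Real.norm_eq_abs, Real.norm_eq_abs, abs_pow, pow_succ, mul_assoc]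

end Helper

section EntryDeriv

/-- Entrywise derivative of the matrix exponential, an instance-free statement proved
using the `L∞` operator norm. -/
lemma exp_entry_hasDerivAt {n : ℕ} (A : Matrix (Fin n) (Fin n) ℝ) (t : ℝ) (i j : Fin n) :
    HasDerivAt (fun u : ℝ => NormedSpace.exp (u • A) i j)
      ((A * NormedSpace.exp (t • A)) i j) t := by
  letI : SeminormedRing (Matrix (Fin n) (Fin n) ℝ) := Matrix.linftyOpSemiNormedRing
  letI : NormedRing (Matrix (Fin n) (Fin n) ℝ) := Matrix.linftyOpNormedRing
  letI : NormedAlgebra ℝ (Matrix (Fin n) (Fin n) ℝ) := Matrix.linftyOpNormedAlgebra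
  have hexp : HasDerivAt (fun u : ℝ => NormedSpace.exp (u • A))
      (A * NormedSpace.exp (t • A)) t := hasDerivAt_exp_smul_const' A t
  have h2 := ((Matrix.entryLinearMap ℝ ℝ i
    j).toContinuousLinearMap).hasFDerivAt.comp_hasDerivAt t hexp
  exact h2

end EntryDeriv

attribute [local instance] Matrix.normedAddCommGroup Matrix.normedSpace

section MatrixCalc

variable {n : ℕ}

/-- Derivative of `u ↦ exp (u • A)` as a matrix-valued function (sup norm / Pi instance). -/
lemma matrix_exp_hasDerivAt (A : Matrix (Fin n) (Fin n) ℝ) (t : ℝ) :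
    HasDerivAt (fun u : ℝ => NormedSpace.exp (u • A))
      (A * NormedSpace.exp (t • A)) t := by
  apply hasDerivAt_pi.2
  intro i
  apply hasDerivAt_pi.2
  intro j
  exact exp_entry_hasDerivAt A t i j

/-- Product rule for matrix-valued functions of a real variable (sup norm). -/
lemma matrix_mul_hasDerivAt {M N M' N' : ℝ → Matrix (Fin n) (Fin n) ℝ} {t : ℝ}
    (hM : HasDerivAt M (M' t) t) (hN : HasDerivAt N (N' t) t) :
    HasDerivAt (fun u => M u * N u) (M' t * N t + M t * N' t) t := by
  apply hasDerivAt_pi.2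
  intro i
  apply hasDerivAt_pi.2
  intro j
  have hMe : ∀ k, HasDerivAt (fun u => M u i k) (M' t i k) t := fun k =>
    hasDerivAt_pi.1 (hasDerivAt_pi.1 hM i) k
  have hNe : ∀ k, HasDerivAt (fun u => N u k j) (N' t k j) t := fun k =>
    hasDerivAt_pi.1 (hasDerivAt_pi.1 hN k) j
  have : HasDerivAt (fun u => ∑ k, M u i k * N u k j)
      (∑ k, (M' t i k * N t k j + M t i k * N' t k j)) t :=
    HasDerivAt.fun_sum fun k _ => (hMe k).mul (hNe k)
  simpa [Matrix.mul_apply, Matrix.add_apply, Finset.sum_add_distrib] using this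

end MatrixCalc


section Main

variable {n : ℕ}

local notation "Mat" => Matrix (Fin n) (Fin n) ℝ

private noncomputable def eM (A : Mat) : ℝ → Mat := fun u => NormedSpace.exp (u • A)

private noncomputable def JM (A : Mat) : ℝ → Mat :=
  fun h => ∫ s in (0:ℝ)..h, NormedSpace.exp (-(s • A))

private lemma eM_hasDerivAt (A : Mat) (t : ℝ) : HasDerivAt (eM A) (A * eM A t) t :=
  matrix_exp_hasDerivAt A t

private lemma eM_neg (A : Mat) (s : ℝ) : NormedSpace.exp (-(s • A)) = eM (-A) s := by
  rw [eM, smul_neg]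

private lemma eM_zero (A : Mat) : eM A 0 = 1 := by
  rw [eM, zero_smul, NormedSpace.exp_zero]

private lemma eM_mul_inv (A : Mat) (t : ℝ) : eM A t * eM (-A) t = 1 := by
  rw [eM, eM, smul_neg,
    ← Matrix.exp_add_of_commute (t • A) _ ((Commute.refl _).neg_right),
    add_neg_cancel, NormedSpace.exp_zero]

private lemma eM_continuous (A : Mat) : Continuous (eM A) :=
  continuous_iff_continuousAt.2 fun t => (eM_hasDerivAt A t).continuousAt

private lemma JM_hasDerivAt (A : Mat) (t : ℝ) : HasDerivAt (JM A) (eM (-A) t) t := by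
  have hc : Continuous (fun s : ℝ => NormedSpace.exp (-(s • A))) := by
    have h2 : (fun s : ℝ => NormedSpace.exp (-(s • A))) = eM (-A) := funext (eM_neg A)
    rw [h2]; exact eM_continuous (-A)
  haveI : TopologicalSpace.PseudoMetrizableSpace Mat :=
    inferInstanceAs (TopologicalSpace.PseudoMetrizableSpace (Fin n → Fin n → ℝ))
  have h := intervalIntegral.integral_hasDerivAt_right
    (hc.intervalIntegrable 0 t) (hc.stronglyMeasurableAtFilter _ _) hc.continuousAt
  rw [eM_neg] at h
  exact h

private lemma JM_zero (A : Mat) : JM A 0 = 0 := intervalIntegral.integral_same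

private noncomputable def F0 (A : Mat) : ℝ → Mat :=
  fun h => eM A h * JM A h - h • eM A (h / 2)

private noncomputable def F1 (A : Mat) : ℝ → Mat := fun h =>
  A * eM A h * JM A h + 1 - eM A (h / 2) - (h / 2) • (A * eM A (h / 2))

private noncomputable def F2 (A : Mat) : ℝ → Mat := fun h =>
  A * (A * eM A h) * JM A h + A - A * eM A (h / 2) - (h / 4) • (A * (A * eM A (h / 2)))

private lemma div_const_hasDerivAt (c t : ℝ) : HasDerivAt (fun u : ℝ => u / c) c⁻¹ t := by
  simpa [one_div] using (hasDerivAt_id' (x := t)).div_const c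

private lemma eM_half_hasDerivAt (A : Mat) (t : ℝ) :
    HasDerivAt (fun u : ℝ => eM A (u / 2)) ((2⁻¹ : ℝ) • (A * eM A (t / 2))) t :=
  by have := (eM_hasDerivAt A (t / 2)).scomp (h := fun u : ℝ => u / 2) t (div_const_hasDerivAt 2 t)
     exact this

private lemma const_mul_hasDerivAt {f : ℝ → Mat} {f' : Mat} {t : ℝ} (B : Mat)
    (hf : HasDerivAt f f' t) : HasDerivAt (fun u => B * f u) (B * f') t := by
  have := matrix_mul_hasDerivAt (M := fun _ => B) (N := f)
    (M' := fun _ => (0 : Mat)) (N' := fun _ => f') (hasDerivAt_const t B) hf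
  simpa using this

private lemma F0_hasDerivAt (A : Mat) (t : ℝ) : HasDerivAt (F0 A) (F1 A t) t := by
  have h1 : HasDerivAt (fun u => eM A u * JM A u) (A * eM A t * JM A t + eM A t * eM (-A) t) t :=
    matrix_mul_hasDerivAt (M' := fun u => A * eM A u) (N' := eM (-A))
      (eM_hasDerivAt A t) (JM_hasDerivAt A t)
  have h2 := (hasDerivAt_id' (x := t)).smul (eM_half_hasDerivAt A t)
  have h3 := h1.sub h2
  have heq : A * eM A t * JM A t + eM A t * eM (-A) t -
      (t • (2⁻¹ : ℝ) • (A * eM A (t / 2)) + (1 : ℝ) • eM A (t / 2)) = F1 A t := by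
    rw [eM_mul_inv, F1]
    match_scalars <;> ring
  rw [heq] at h3
  exact h3

private lemma F1_hasDerivAt (A : Mat) (t : ℝ) : HasDerivAt (F1 A) (F2 A t) t := by
  have p1 : HasDerivAt (fun u => A * eM A u * JM A u)
      (A * (A * eM A t) * JM A t + A * eM A t * eM (-A) t) t :=
    matrix_mul_hasDerivAt (M' := fun u => A * (A * eM A u)) (N' := eM (-A))
      (const_mul_hasDerivAt A (eM_hasDerivAt A t)) (JM_hasDerivAt A t)
  have p2 := eM_half_hasDerivAt A t
  have p3 := (div_const_hasDerivAt 2 t).smul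
    (const_mul_hasDerivAt A (eM_half_hasDerivAt A t))
  have h3 := ((p1.add_const (1 : Mat)).sub p2).sub p3
  have hA : A * eM A t * eM (-A) t = A := by
    rw [mul_assoc, eM_mul_inv, mul_one]
  have heq : A * (A * eM A t) * JM A t + A * eM A t * eM (-A) t -
      (2⁻¹ : ℝ) • (A * eM A (t / 2)) -
      ((t / 2) • (A * (2⁻¹ : ℝ) • (A * eM A (t / 2))) +
        (2⁻¹ : ℝ) • (A * eM A (t / 2))) = F2 A t := by
    rw [hA, F2, mul_smul_comm]
    match_scalars <;> ring
  rw [heq] at h3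
  exact h3

private lemma F2_zero (A : Mat) : F2 A 0 = 0 := by
  simp [F2, JM_zero, eM_zero]

private lemma F1_zero (A : Mat) : F1 A 0 = 0 := by
  simp [F1, JM_zero, eM_zero]

private lemma F0_zero (A : Mat) : F0 A 0 = 0 := by
  simp [F0, JM_zero, eM_zero]

private lemma F2_differentiableAt (A : Mat) : DifferentiableAt ℝ (F2 A) 0 := by
  have p1 : HasDerivAt (fun u => A * (A * eM A u) * JM A u)
      (A * (A * (A * eM A 0)) * JM A 0 + A * (A * eM A 0) * eM (-A) 0) 0 :=
    matrix_mul_hasDerivAt (M' := fun u => A * (A * (A * eM A u))) (N' := eM (-A))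
      (const_mul_hasDerivAt A (const_mul_hasDerivAt A (eM_hasDerivAt A 0)))
      (JM_hasDerivAt A 0)
  have p2 := const_mul_hasDerivAt A (eM_half_hasDerivAt A 0)
  have p3 := (div_const_hasDerivAt 4 0).smul
    (const_mul_hasDerivAt A (const_mul_hasDerivAt A (eM_half_hasDerivAt A 0)))
  exact (((p1.add_const A).sub p2).sub p3).differentiableAt

private lemma F2_isBigO (A : Mat) : F2 A =O[nhds (0:ℝ)] fun h : ℝ => h ^ 1 := by
  have h := (F2_differentiableAt A).isBigO_sub
  simp only [F2_zero, sub_zero] at h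
  simpa using h

private lemma F0_isBigO (A : Mat) : F0 A =O[nhds (0:ℝ)] fun h : ℝ => h ^ 3 :=
  isBigO_pow_succ_of_deriv (k := 2) (F0_hasDerivAt A) (F0_zero A)
    (isBigO_pow_succ_of_deriv (k := 1) (F1_hasDerivAt A) (F1_zero A) (F2_isBigO A))

private noncomputable def mulVecCLM (r : Fin n → ℝ) :
    Mat →L[ℝ] (Fin n → ℝ) :=
  LinearMap.toContinuousLinearMap
    { toFun := fun M => M.mulVec r
      map_add' := fun M N => Matrix.add_mulVec M N r
      map_smul' := fun c M => Matrix.smul_mulVec c M r }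

private lemma mulVecCLM_apply (r : Fin n → ℝ) (M : Mat) :
    mulVecCLM r M = M.mulVec r := rfl

end Main

theorem stmt_4 (n : ℕ) (A : Matrix (Fin n) (Fin n) ℝ) (r : Fin n → ℝ) :
    (fun h : ℝ =>
        (NormedSpace.exp (h • A) *
            ∫ s in (0:ℝ)..h, NormedSpace.exp (-(s • A))).mulVec r -
          h • (NormedSpace.exp ((h / 2) • A)).mulVec r)
      =O[nhds (0:ℝ)] fun h : ℝ => h ^ 3 := by
  classical
  have key := F0_isBigO A
  have hfun : (fun h : ℝ =>
      (NormedSpace.exp (h • A) *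
          ∫ s in (0:ℝ)..h, NormedSpace.exp (-(s • A))).mulVec r -
        h • (NormedSpace.exp ((h / 2) • A)).mulVec r) = fun h => mulVecCLM r (F0 A h) := by
    funext h
    simp [mulVecCLM_apply, F0, eM, JM, Matrix.sub_mulVec, Matrix.smul_mulVec]
  rw [hfun]
  exact ((mulVecCLM r).isBigO_comp (F0 A) (nhds 0)).trans key
end

section
/- Let ι be a finite index set, σ : ι → ℝ with σ(i) > 0 for all i (cell areas), l : ι → ι → ℝ with l(i,j) ≥ 0 (interface lengths), vn : ι → ι → ℝ (interface normal velocities), u : ι → ℝ with u(i) ≥ 0 (cell values of θh), and Δt ≥ 0. Define the upwind interface flux F(i,j) = u(i)·vn(i,j) if vn(i,j) > 0 and F(i,j) = u(j)·vn(i,j) otherwise, and the explicit Euler update u′(i) = u(i) − (Δt/σ(i)) Σ_j l(i,j)·F(i,j). If the CFL-type condition Δt · Σ_j l(i,j) · max(vn(i,j), 0) ≤ σ(i) holds for every i, then u′(i) ≥ 0 for every i. -/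
/-!
Upwinding makes the outflow of cell `i` across each interface `u i * max (vn i j) 0`, while the
inflow `u j * vn i j` with `vn i j ≤ 0` can only increase `u' i`. Hence
`u' i ≥ u i * (1 - Δt / σ i * ∑ j, l i j * max (vn i j) 0)`, which is nonnegative by the CFL
condition.
-/

open scoped BigOperators

open Finset

lemma upwind_flux_le {a b v : ℝ} (hb : 0 ≤ b) :
    (if 0 < v then a * v else b * v) ≤ a * max v 0 := by
  split_ifs with hv
  · rw [max_eq_left hv.le]
  · rw [not_lt] at hv
    rw [max_eq_right hv, mul_zero]
    exact mul_nonpos_of_nonneg_of_nonpos hb hv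

lemma sum_mul_upwind_flux_le {ι : Type*} (s : Finset ι) (a : ℝ) {b v w : ι → ℝ}
    (hb : ∀ j, 0 ≤ b j) (hw : ∀ j, 0 ≤ w j) :
    ∑ j ∈ s, w j * (if 0 < v j then a * v j else b j * v j)
      ≤ a * ∑ j ∈ s, w j * max (v j) 0 := by
  rw [mul_sum]
  refine sum_le_sum fun j _ => ?_
  calc w j * (if 0 < v j then a * v j else b j * v j)
      ≤ w j * (a * max (v j) 0) := mul_le_mul_of_nonneg_left (upwind_flux_le (hb j)) (hw j)
    _ = a * (w j * max (v j) 0) := mul_left_comm _ _ _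

lemma sub_div_mul_nonneg_of_cfl {u Δt σ S P : ℝ} (hu : 0 ≤ u) (hΔt : 0 ≤ Δt) (hP : 0 ≤ P)
    (hS : S ≤ u * P) (hCFL : Δt * P ≤ σ) :
    0 ≤ u - Δt / σ * S := by
  have hσ : 0 ≤ σ := (mul_nonneg hΔt hP).trans hCFL
  rw [sub_nonneg]
  calc Δt / σ * S
      ≤ Δt / σ * (u * P) := mul_le_mul_of_nonneg_left hS (div_nonneg hΔt hσ)
    _ = u * (Δt * P / σ) := by ring
    _ ≤ u * 1 := mul_le_mul_of_nonneg_left (div_le_one_of_le₀ hCFL hσ) hu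
    _ = u := mul_one u

theorem stmt_8_general {ι : Type*} [Fintype ι]
    (σ : ι → ℝ)
    (l : ι → ι → ℝ) (hl : ∀ i j, 0 ≤ l i j)
    (vn : ι → ι → ℝ)
    (u : ι → ℝ) (hu : ∀ i, 0 ≤ u i)
    (Δt : ℝ) (hΔt : 0 ≤ Δt)
    (F : ι → ι → ℝ)
    (hF : F = fun i j => if 0 < vn i j then u i * vn i j else u j * vn i j)
    (u' : ι → ℝ)
    (hu' : u' = fun i => u i - (Δt / σ i) * ∑ j, l i j * F i j)
    (hCFL : ∀ i, Δt * ∑ j, l i j * max (vn i j) 0 ≤ σ i) :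
    ∀ i, 0 ≤ u' i := by
  intro i
  subst hF hu'
  have houtflow : 0 ≤ ∑ j, l i j * max (vn i j) 0 :=
    sum_nonneg fun j _ => mul_nonneg (hl i j) (le_max_right _ _)
  exact sub_div_mul_nonneg_of_cfl (hu i) hΔt houtflow
    (sum_mul_upwind_flux_le univ (u i) hu (hl i)) (hCFL i)

theorem stmt_8 {ι : Type*} [Fintype ι]
    (σ : ι → ℝ) (hσ : ∀ i, 0 < σ i)
    (l : ι → ι → ℝ) (hl : ∀ i j, 0 ≤ l i j)
    (vn : ι → ι → ℝ)
    (u : ι → ℝ) (hu : ∀ i, 0 ≤ u i)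
    (Δt : ℝ) (hΔt : 0 ≤ Δt)
    (F : ι → ι → ℝ)
    (hF : F = fun i j => if 0 < vn i j then u i * vn i j else u j * vn i j)
    (u' : ι → ℝ)
    (hu' : u' = fun i => u i - (Δt / σ i) * ∑ j, l i j * F i j)
    (hCFL : ∀ i, Δt * ∑ j, l i j * max (vn i j) 0 ≤ σ i) :
    ∀ i, 0 ≤ u' i :=
  stmt_8_general σ l hl vn u hu Δt hΔt F hF u' hu' hCFL
end

section
/- Let a, b, Δt, x₀, y₀, r₁, r₂ be real numbers with a ≥ 0, b ≥ 0, Δt ≥ 0, x₀ ≥ 0, y₀ ≥ 0, r₁ ≥ 0 and r₂ ≥ 0, and let A be the 2×2 real matrix with first row (−a, b) and second row (a, −b). Then both components of the vector exp(Δt·A)·(x₀, y₀) + Δt · exp((Δt/2)·A)·(r₁, r₂) are nonnegative; i.e., the approximate source-term update of the fractional-step scheme preserves nonnegativity. -/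
open Matrix

open NormedSpace in
lemma exp_entry_nonneg_aux (M : Matrix (Fin 2) (Fin 2) ℝ) (h : ∀ i j, 0 ≤ M i j)
    (i j : Fin 2) : 0 ≤ exp M i j := by
  letI : NormedRing (Matrix (Fin 2) (Fin 2) ℝ) := Matrix.linftyOpNormedRing
  letI : NormedAlgebra ℝ (Matrix (Fin 2) (Fin 2) ℝ) := Matrix.linftyOpNormedAlgebra
  have hpow : ∀ n : ℕ, ∀ i j, 0 ≤ (M ^ n) i j := by
    intro n
    induction n with
    | zero => intro i j; simp [Matrix.one_apply]; positivity
    | succ n ih =>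
      intro i j
      rw [pow_succ, Matrix.mul_apply]
      exact Finset.sum_nonneg fun k _ => mul_nonneg (ih i k) (h k j)
  have hs : HasSum (fun n : ℕ => (((n.factorial : ℝ)⁻¹) • M ^ n)) (exp M) :=
    exp_series_hasSum_exp' M
  have cont : Continuous fun N : Matrix (Fin 2) (Fin 2) ℝ => N i j :=
    (continuous_apply j).comp (continuous_apply i)
  have hentry : HasSum (fun n : ℕ => (((n.factorial : ℝ)⁻¹) • M ^ n) i j) (exp M i j) :=
    hs.map (AddMonoidHom.mk' (fun N : Matrix (Fin 2) (Fin 2) ℝ => N i j)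
      (fun _ _ => rfl)) cont
  refine hentry.nonneg fun n => ?_
  simp only [Matrix.smul_apply, smul_eq_mul]
  exact mul_nonneg (by positivity) (hpow n i j)

open NormedSpace in
lemma exp_sA_entry_nonneg (a b s : ℝ) (ha : 0 ≤ a) (hb : 0 ≤ b) (hs : 0 ≤ s)
    (i j : Fin 2) : 0 ≤ exp (s • !![-a, b; a, -b]) i j := by
  letI : NormedRing (Matrix (Fin 2) (Fin 2) ℝ) := Matrix.linftyOpNormedRing
  letI : NormedAlgebra ℝ (Matrix (Fin 2) (Fin 2) ℝ) := Matrix.linftyOpNormedAlgebra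
  have key : s • !![-a, b; a, -b]
      = (-(s * (a + b))) • (1 : Matrix (Fin 2) (Fin 2) ℝ) + s • !![b, b; a, a] := by
    ext i j
    fin_cases i <;> fin_cases j <;>
      simp [Matrix.one_apply] <;> ring
  have hcomm : Commute ((-(s * (a + b))) • (1 : Matrix (Fin 2) (Fin 2) ℝ))
      (s • !![b, b; a, a]) := (Commute.one_left _).smul_left _
  rw [key, Matrix.exp_add_of_commute _ _ hcomm]
  have h1 : exp ((-(s * (a + b))) • (1 : Matrix (Fin 2) (Fin 2) ℝ))
      = Real.exp (-(s * (a + b))) • (1 : Matrix (Fin 2) (Fin 2) ℝ) := by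
    rw [← Algebra.algebraMap_eq_smul_one]; erw [← algebraMap_exp_comm]; rw [
      Algebra.algebraMap_eq_smul_one, Real.exp_eq_exp_ℝ]
  rw [h1, Matrix.smul_mul, Matrix.one_mul, Matrix.smul_apply, smul_eq_mul]
  refine mul_nonneg (Real.exp_nonneg _) ?_
  refine exp_entry_nonneg_aux _ (fun i j => ?_) i j
  fin_cases i <;> fin_cases j <;> simpa using by positivity

theorem stmt_12 (a b Δt x₀ y₀ r₁ r₂ : ℝ)
    (ha : 0 ≤ a) (hb : 0 ≤ b) (hΔt : 0 ≤ Δt)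
    (hx : 0 ≤ x₀) (hy : 0 ≤ y₀) (hr₁ : 0 ≤ r₁) (hr₂ : 0 ≤ r₂)
    (A : Matrix (Fin 2) (Fin 2) ℝ) (hA : A = !![-a, b; a, -b]) :
    ∀ k : Fin 2,
      0 ≤ ((NormedSpace.exp (Δt • A)).mulVec ![x₀, y₀] +
            Δt • (NormedSpace.exp ((Δt / 2) • A)).mulVec ![r₁, r₂]) k := by
  subst hA
  intro k
  have h1 := fun j => exp_sA_entry_nonneg a b Δt ha hb hΔt k j
  have h2 := fun j => exp_sA_entry_nonneg a b (Δt / 2) ha hb (by linarith) k j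
  have hv : ∀ j : Fin 2, 0 ≤ (![x₀, y₀] : Fin 2 → ℝ) j := by
    intro j; fin_cases j <;> assumption
  have hr : ∀ j : Fin 2, 0 ≤ (![r₁, r₂] : Fin 2 → ℝ) j := by
    intro j; fin_cases j <;> assumption
  have m1 : 0 ≤ (NormedSpace.exp (Δt • !![-a, b; a, -b])).mulVec ![x₀, y₀] k := by
    unfold Matrix.mulVec
    exact Finset.sum_nonneg fun j _ => mul_nonneg (h1 j) (hv j)
  have m2 : 0 ≤ (NormedSpace.exp ((Δt / 2) • !![-a, b; a, -b])).mulVec ![r₁, r₂] k := by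
    unfold Matrix.mulVec
    exact Finset.sum_nonneg fun j _ => mul_nonneg (h2 j) (hr j)
  simp only [Pi.add_apply, Pi.smul_apply, smul_eq_mul]
  exact add_nonneg m1 (mul_nonneg hΔt m2)
end
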